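/- Let E be an elliptic curve over a field K with char(K) ≠ 3 and P ∈ E(K). Suppose R₁, R₂, R₃ are three points on E (over an algebraic closure of K) with 3Rᵢ = P for each i, whose x-coordinates are the roots of an irreducible cubic factor f of the degree-9 polynomial whose roots are the x-coordinates of the preimages of P under multiplication by 3, and suppose every element of Gal(L/K) (L the splitting field of f) permutes {R₁, R₂, R₃}. Then R₁ + R₂ + R₃ − P is a K-rational 3-torsion point of E. -/

import Mathlib

/-!
Adding up `3Rᵢ = P` gives `3 (R₁ + R₂ + R₃ - P) = 0`. The `Rᵢ` are distinct, since their
`x`-coordinates are, and each Galois automorphism acts injectively on points and maps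
`{R₁, R₂, R₃}` into itself; so it permutes the three points and fixes their sum, as well as `P`,
which is defined over `K`. An irreducible cubic is separable in characteristic `≠ 3`, so the
splitting field is Galois over `K`, and a point fixed by the whole Galois group has coordinates
in `K`.
-/

open WeierstrassCurve WeierstrassCurve.Affine Polynomial

universe u

open scoped Classical in
/-- A model of an isogeny defined over `K` between elliptic curves given by Weierstrass
models `E` and `E'` over `K`, of degree `d`: a compatible family of group homomorphisms on
points over every field extension of `K`, whose kernel over any algebraically closed
extension of `K` is finite of cardinality `d`. -/
structure KIsogeny (K : Type u) [Field K] (E E' : WeierstrassCurve K) (d : ℕ) where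
  hom : ∀ (L : Type u) [Field L] [Algebra K L], Affine.Point (Affine.baseChange E L) →+ Affine.Point (Affine.baseChange E' L)
  compat : ∀ (L : Type u) [Field L] [Algebra K L] (M : Type u) [Field M] [Algebra K M]
    (f : L →ₐ[K] M) (P : Affine.Point (Affine.baseChange E L)),
      hom M (Point.map (W' := E) f P) = Point.map (W' := E') f (hom L P)
  card_ker : ∀ (L : Type u) [Field L] [Algebra K L] [IsAlgClosed L],
      Nat.card (AddMonoidHom.ker (hom L)) = d

lemma Ring.natCast_ne_zero_of_ringChar_ne {R : Type*} [NonAssocSemiring R] [Nontrivial R]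
    {p : ℕ} (hp : p.Prime) (hR : ringChar R ≠ p) : (p : R) ≠ 0 := by
  rw [Ne, ringChar.spec, Nat.dvd_prime hp]
  exact mt (or_iff_left hR).mp CharP.ringChar_ne_one

theorem Irreducible.separable_of_natCast_natDegree_ne_zero {F : Type*} [Field F]
    {f : F[X]} (hf : Irreducible f) (hn : (f.natDegree : F) ≠ 0) : f.Separable := by
  rw [separable_iff_derivative_ne_zero hf]
  obtain ⟨m, hm⟩ : ∃ m, f.natDegree = m + 1 :=
    Nat.exists_eq_succ_of_ne_zero fun h ↦ hn (by rw [h, Nat.cast_zero])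
  intro hd
  have hcoeff := coeff_derivative f m
  rw [hd, coeff_zero, ← hm, ← leadingCoeff, eq_comm, mul_eq_zero,
    leadingCoeff_eq_zero] at hcoeff
  exact hcoeff.elim hf.ne_zero (by simpa [hm] using hn)

lemma AddMonoidHom.map_sum_eq_of_mapsTo {G : Type*} [AddCommMonoid G] (φ : G →+ G)
    (hφ : Function.Injective φ) {s : Finset G} (h : Set.MapsTo φ s s) :
    φ (∑ x ∈ s, x) = ∑ x ∈ s, x := by
  rw [map_sum]
  exact Finset.sum_nbij φ h hφ.injOn
    (Finset.surjOn_of_injOn_of_card_le φ h hφ.injOn le_rfl) fun _ _ ↦ rfl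

lemma AddMonoidHom.map_add_add_eq_of_mapsTo {G : Type*} [AddCommMonoid G] [DecidableEq G]
    (φ : G →+ G) (hφ : Function.Injective φ) {a b c : G} (hab : a ≠ b) (hac : a ≠ c) (hbc : b ≠ c)
    (h : Set.MapsTo φ {a, b, c} {a, b, c}) : φ (a + b + c) = a + b + c := by
  have hsum := φ.map_sum_eq_of_mapsTo hφ (s := {a, b, c}) (by simpa using h)
  rwa [Finset.sum_insert (by simp [hab, hac]), Finset.sum_pair hbc, ← add_assoc] at hsum

lemma WeierstrassCurve.Affine.Point.some_ne_some_of_x_ne {R : Type*} [CommRing R]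
    {W : Affine R} {x x' y y' : R} {h : W.Nonsingular x y} {h' : W.Nonsingular x' y'}
    (hx : x ≠ x') : Point.some x y h ≠ Point.some x' y' h' :=
  fun heq ↦ hx (Point.some.inj heq).1

open scoped Classical in
lemma WeierstrassCurve.Affine.Point.exists_baseChange_eq_of_forall_map_eq
    {K L : Type*} [Field K] [Field L] [Algebra K L] [IsGalois K L] {W : WeierstrassCurve K}
    (S : Affine.Point (Affine.baseChange W L))
    (hS : ∀ σ : L ≃ₐ[K] L, Point.map (W' := W) σ.toAlgHom S = S) :
    ∃ T : Affine.Point (Affine.baseChange W K), Point.baseChange (W' := W) K L T = S := by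
  cases S with
  | zero => exact ⟨0, rfl⟩
  | some x y h =>
    have hfix (σ : L ≃ₐ[K] L) : σ x = x ∧ σ y = y := by
      simpa [Point.map_some] using hS σ
    obtain ⟨x, rfl⟩ := (InfiniteGalois.mem_range_algebraMap_iff_fixed x).2 fun σ ↦ (hfix σ).1
    obtain ⟨y, rfl⟩ := (InfiniteGalois.mem_range_algebraMap_iff_fixed y).2 fun σ ↦ (hfix σ).2
    exact ⟨.some _ _ ((baseChange_nonsingular W (Algebra.ofId K L).injective x y).1 h), rfl⟩

open scoped Classical in
theorem stmt5_general (K : Type u) [Field K] (hchar3 : ringChar K ≠ 3)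
    (E : WeierstrassCurve K)
    (P : Affine.Point (Affine.baseChange E K))
    (f : K[X]) (hirr : Irreducible f) (hdeg : f.natDegree = 3)
    (x₁ x₂ x₃ y₁ y₂ y₃ : f.SplittingField)
    (h₁ : (E.baseChange f.SplittingField).toAffine.Nonsingular x₁ y₁)
    (h₂ : (E.baseChange f.SplittingField).toAffine.Nonsingular x₂ y₂)
    (h₃ : (E.baseChange f.SplittingField).toAffine.Nonsingular x₃ y₃)
    (R₁ R₂ R₃ : Affine.Point (Affine.baseChange E f.SplittingField))
    (hR₁ : R₁ = Point.some _ _ h₁) (hR₂ : R₂ = Point.some _ _ h₂) (hR₃ : R₃ = Point.some _ _ h₃)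
    (hne₁₂ : x₁ ≠ x₂) (hne₁₃ : x₁ ≠ x₃) (hne₂₃ : x₂ ≠ x₃)
    (h3R₁ : 3 • R₁ = Point.baseChange (W' := E) K f.SplittingField P)
    (h3R₂ : 3 • R₂ = Point.baseChange (W' := E) K f.SplittingField P)
    (h3R₃ : 3 • R₃ = Point.baseChange (W' := E) K f.SplittingField P)
    (hperm : ∀ σ : f.SplittingField ≃ₐ[K] f.SplittingField,
      ∀ R ∈ ({R₁, R₂, R₃} : Set (Affine.Point (Affine.baseChange E f.SplittingField))),
        Point.map (W' := E) σ.toAlgHom R ∈ ({R₁, R₂, R₃} : Set (Affine.Point (Affine.baseChange E f.SplittingField)))) :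
    ∃ T : Affine.Point (Affine.baseChange E K), 3 • T = 0 ∧
      Point.baseChange (W' := E) K f.SplittingField T =
        R₁ + R₂ + R₃ - Point.baseChange (W' := E) K f.SplittingField P := by
  have hsep : f.Separable := hirr.separable_of_natCast_natDegree_ne_zero <| by
    exact_mod_cast hdeg ▸ Ring.natCast_ne_zero_of_ringChar_ne Nat.prime_three hchar3
  have : IsGalois K f.SplittingField := IsGalois.of_separable_splitting_field hsep
  subst hR₁ hR₂ hR₃
  set S := _ + _ + _ - Point.baseChange (W' := E) K f.SplittingField P with hS
  have h3S : 3 • S = 0 := by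
    rw [hS, smul_sub, smul_add, smul_add, h3R₁, h3R₂, h3R₃]
    abel
  have hfix (σ : f.SplittingField ≃ₐ[K] f.SplittingField) :
      Point.map (W' := E) σ.toAlgHom S = S := by
    rw [hS, map_sub, Point.map_baseChange, AddMonoidHom.map_add_add_eq_of_mapsTo _
      (Point.map_injective _) (Point.some_ne_some_of_x_ne hne₁₂)
      (Point.some_ne_some_of_x_ne hne₁₃) (Point.some_ne_some_of_x_ne hne₂₃) (hperm σ)]
  obtain ⟨T, hT⟩ := Point.exists_baseChange_eq_of_forall_map_eq S hfix
  refine ⟨T, Point.map_injective (W' := E) (Algebra.ofId K f.SplittingField) ?_, hT⟩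
  rw [map_nsmul, hT, h3S, map_zero]

open scoped Classical in
/-- If `3Rᵢ = P` for three points whose `x`-coordinates are the roots of an irreducible cubic
factor of the `3`-division polynomial of `P`, and the Galois group of the splitting field
permutes `{R₁, R₂, R₃}`, then `R₁ + R₂ + R₃ − P` is a `K`-rational `3`-torsion point. -/
theorem stmt5 (K : Type u) [Field K] (hchar3 : ringChar K ≠ 3)
    (E : WeierstrassCurve K) [E.IsElliptic]
    (xP yP : K) (hP : (E.baseChange K).toAffine.Nonsingular xP yP)
    (P : Affine.Point (Affine.baseChange E K)) (hPeq : P = Point.some _ _ hP)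
    (f : K[X]) (hirr : Irreducible f) (hdeg : f.natDegree = 3)
    (hdvd : f ∣ E.Φ 3 - C xP * E.ΨSq 3)
    (x₁ x₂ x₃ y₁ y₂ y₃ : f.SplittingField)
    (h₁ : (E.baseChange f.SplittingField).toAffine.Nonsingular x₁ y₁)
    (h₂ : (E.baseChange f.SplittingField).toAffine.Nonsingular x₂ y₂)
    (h₃ : (E.baseChange f.SplittingField).toAffine.Nonsingular x₃ y₃)
    (R₁ R₂ R₃ : Affine.Point (Affine.baseChange E f.SplittingField))
    (hR₁ : R₁ = Point.some _ _ h₁) (hR₂ : R₂ = Point.some _ _ h₂) (hR₃ : R₃ = Point.some _ _ h₃)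
    (hroot₁ : aeval x₁ f = 0) (hroot₂ : aeval x₂ f = 0) (hroot₃ : aeval x₃ f = 0)
    (hne₁₂ : x₁ ≠ x₂) (hne₁₃ : x₁ ≠ x₃) (hne₂₃ : x₂ ≠ x₃)
    (h3R₁ : 3 • R₁ = Point.baseChange (W' := E) K f.SplittingField P)
    (h3R₂ : 3 • R₂ = Point.baseChange (W' := E) K f.SplittingField P)
    (h3R₃ : 3 • R₃ = Point.baseChange (W' := E) K f.SplittingField P)
    (hperm : ∀ σ : f.SplittingField ≃ₐ[K] f.SplittingField,
      ∀ R ∈ ({R₁, R₂, R₃} : Set (Affine.Point (Affine.baseChange E f.SplittingField))),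
        Point.map (W' := E) σ.toAlgHom R ∈ ({R₁, R₂, R₃} : Set (Affine.Point (Affine.baseChange E f.SplittingField)))) :
    ∃ T : Affine.Point (Affine.baseChange E K), 3 • T = 0 ∧
      Point.baseChange (W' := E) K f.SplittingField T =
        R₁ + R₂ + R₃ - Point.baseChange (W' := E) K f.SplittingField P :=
  stmt5_general K hchar3 E P f hirr hdeg x₁ x₂ x₃ y₁ y₂ y₃ h₁ h₂ h₃ R₁ R₂ R₃ hR₁ hR₂ hR₃ hne₁₂ hne₁₃
    hne₂₃ h3R₁ h3R₂ h3R₃ hperm
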